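/- Assume M > (2/(3√3))√(α³/β) and let (x_l, v_l) be a solution of the controlled discrete Klein–Gordon system on [0,∞) with the feedback control u_l(t) = u(v_l(t)). Then for every l ∈ Λ̄ the discrete Laplacian of the positions converges to zero: lim_{t→∞} Σ_{l'∼l} (x_{l'}(t) − x_l(t))/h² = 0. -/

import Mathlib

/-!
The energy `E = ∑ v_l² / 2 + (D² / 4) ∑_l ∑_{l' ∼ l} (x_{l'} - x_l)²` satisfies
`E' = ∑ v_l G(v_l)` with `G(y) = (α - β y²) y + u(y)`, and the bound on `M` gives
`y G(y) ≤ -c y²`. Hence `E` decreases to a limit and stays bounded, which bounds `v`, `Δ_D x`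
and `Δ_D v`. A Barbalat-type argument on `E` then gives `v_l → 0`. Once `|v_l| < a₁` the control
is linear, so `v̇_l = Δ_D x(l) + (α - M / a₁) v_l - β v_l³` has a bounded derivative, and
Barbalat's lemma applied to `v_l` gives `v̇_l → 0`, hence `Δ_D x(l) → 0`.
-/

open Finset Filter

/-- The discrete torus `(ℤ/Dℤ)^n`. -/
abbrev Site (D n : ℕ) : Type := Fin n → ZMod D

/-- Sum over the `2n` neighbors `l ± e_k` of a site `l`. -/
noncomputable def nbrSum {D n : ℕ} (g : Site D n → ℝ) (l : Site D n) : ℝ :=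
  ∑ k : Fin n, (g (Function.update l k (l k + 1)) + g (Function.update l k (l k - 1)))

/-- The discrete Laplacian `Δ_D f(l) = Σ_{l'∼l} (f(l') − f(l))/h²` with `h = 1/D`. -/
noncomputable def lap {D n : ℕ} (f : Site D n → ℝ) (l : Site D n) : ℝ :=
  nbrSum (fun l' => (f l' - f l) / ((1 : ℝ) / (D : ℝ)) ^ 2) l


/-- The feedback control of the paper (equation (2.3)). -/
noncomputable def fb (M a₁ a₂ : ℝ) (v : ℝ) : ℝ :=
  if 2 * a₂ ≤ |v| then 0
  else if a₂ < |v| then -M * (v / |v|) * (2 - |v| / a₂)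
  else if a₁ ≤ |v| then -M * (v / |v|)
  else -M * (v / a₁)

open Asymptotics Topology

lemma eventually_exists_mem_Ioo_abs_deriv_lt {f f' : ℝ → ℝ} {L δ m : ℝ}
    (hf : Tendsto f atTop (𝓝 L)) (hff' : ∀ᶠ t in atTop, HasDerivAt f (f' t) t)
    (hδ : 0 < δ) (hm : 0 < m) :
    ∀ᶠ t in atTop, ∃ s ∈ Set.Ioo t (t + δ), |f' s| < m := by
  have hslope : Tendsto (fun t => (f (t + δ) - f t) / δ) atTop (𝓝 0) := by
    simpa using ((hf.comp (tendsto_atTop_add_const_right _ δ tendsto_id)).sub hf).div_const δ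
  obtain ⟨T, hT⟩ := eventually_atTop.1 hff'
  filter_upwards [eventually_ge_atTop T, Metric.tendsto_nhds.1 hslope m hm] with t hTt hsmall
  obtain ⟨s, hs, hs'⟩ := exists_hasDerivAt_eq_slope f f' (lt_add_of_pos_right t hδ)
    (fun r hr => (hT r (hTt.trans hr.1)).continuousAt.continuousWithinAt)
    (fun r hr => hT r (hTt.trans hr.1.le))
  refine ⟨s, hs, ?_⟩
  rwa [hs', add_sub_cancel_left, ← sub_zero ((f (t + δ) - f t) / δ), ← Real.dist_eq]

lemma exists_pos_eventually_abs_sub_le_of_isBigO_deriv {g g' : ℝ → ℝ}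
    (hgg' : ∀ᶠ t in atTop, HasDerivAt g (g' t) t) (hg' : g' =O[atTop] fun _ => (1 : ℝ))
    {ε : ℝ} (hε : 0 < ε) :
    ∃ δ > 0, ∀ᶠ t in atTop, ∀ s ∈ Set.Icc t (t + δ), |g s - g t| ≤ ε := by
  obtain ⟨B, hB⟩ := hg'.bound
  obtain ⟨T, hT⟩ := eventually_atTop.1 (hgg'.and hB)
  refine ⟨ε / (|B| + 1), by positivity, ?_⟩
  filter_upwards [eventually_ge_atTop T] with t ht s hs
  have hlip := Convex.norm_image_sub_le_of_norm_hasDerivWithin_le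
    (s := Set.Ici T) (C := |B| + 1)
    (fun r hr => (hT r hr).1.hasDerivWithinAt)
    (fun r hr => by linarith [(hT r hr).2.trans_eq (by rw [norm_one, mul_one]), le_abs_self B])
    (convex_Ici T) ht (ht.trans hs.1)
  rw [Real.norm_eq_abs, Real.norm_eq_abs, abs_of_nonneg (sub_nonneg.2 hs.1)] at hlip
  calc |g s - g t| ≤ (|B| + 1) * (s - t) := hlip
    _ ≤ (|B| + 1) * (ε / (|B| + 1)) := by gcongr; linarith [hs.2]
    _ = ε := by field_simp

/-- Barbalat's lemma. -/
theorem tendsto_zero_of_tendsto_of_isBigO_deriv {f g g' : ℝ → ℝ} {L : ℝ}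
    (hf : Tendsto f atTop (𝓝 L)) (hfg : ∀ᶠ t in atTop, HasDerivAt f (g t) t)
    (hgg' : ∀ᶠ t in atTop, HasDerivAt g (g' t) t) (hg' : g' =O[atTop] fun _ => (1 : ℝ)) :
    Tendsto g atTop (𝓝 0) := by
  refine Metric.tendsto_nhds.2 fun ε hε => ?_
  obtain ⟨δ, hδ, hnear⟩ :=
    exists_pos_eventually_abs_sub_le_of_isBigO_deriv hgg' hg' (half_pos hε)
  filter_upwards [hnear, eventually_exists_mem_Ioo_abs_deriv_lt hf hfg hδ (half_pos hε)]
    with t hnear ⟨s, hs, hgs⟩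
  have hts := hnear s (Set.Ioo_subset_Icc_self hs)
  rw [Real.dist_eq, sub_zero]
  linarith [abs_sub_abs_le_abs_sub (g t) (g s), abs_sub_comm (g t) (g s)]

theorem tendsto_zero_of_deriv_le_neg_mul_sq {E e g g' : ℝ → ℝ} {L c : ℝ} (hc : 0 < c)
    (hE : Tendsto E atTop (𝓝 L)) (hEe : ∀ᶠ t in atTop, HasDerivAt E (e t) t)
    (he : ∀ᶠ t in atTop, e t ≤ -(c * g t ^ 2))
    (hgg' : ∀ᶠ t in atTop, HasDerivAt g (g' t) t) (hg' : g' =O[atTop] fun _ => (1 : ℝ)) :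
    Tendsto g atTop (𝓝 0) := by
  refine Metric.tendsto_nhds.2 fun ε hε => ?_
  obtain ⟨δ, hδ, hnear⟩ :=
    exists_pos_eventually_abs_sub_le_of_isBigO_deriv hgg' hg' (half_pos hε)
  obtain ⟨T, hT⟩ := eventually_atTop.1 he
  filter_upwards [eventually_ge_atTop T, hnear,
    eventually_exists_mem_Ioo_abs_deriv_lt hE hEe hδ (by positivity : 0 < c * (ε / 2) ^ 2)]
    with t hTt hnear ⟨s, hs, hes⟩
  have hts := hnear s (Set.Ioo_subset_Icc_self hs)
  have hgs : |g s| < ε / 2 := by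
    refine abs_lt_of_sq_lt_sq (lt_of_mul_lt_mul_left ?_ hc.le) (half_pos hε).le
    linarith [hT s (hTt.trans hs.1.le), neg_abs_le (e s)]
  rw [Real.dist_eq, sub_zero]
  linarith [abs_sub_abs_le_abs_sub (g t) (g s), abs_sub_comm (g t) (g s)]

lemma isBigO_one_of_abs_le {f : ℝ → ℝ} {C : ℝ} (hf : ∀ t, 0 ≤ t → |f t| ≤ C) :
    f =O[atTop] fun _ => (1 : ℝ) :=
  IsBigO.of_bound C <| (eventually_ge_atTop 0).mono fun t ht => by simpa using hf t ht

section Lattice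

variable {D n : ℕ}

lemma nbrSum_mul_left (c : ℝ) (g : Site D n → ℝ) (l : Site D n) :
    nbrSum (fun l' => c * g l') l = c * nbrSum g l := by
  simp only [nbrSum, Finset.mul_sum, mul_add]

lemma nbrSum_nonneg {g : Site D n → ℝ} (hg : ∀ l', 0 ≤ g l') (l : Site D n) :
    0 ≤ nbrSum g l :=
  Finset.sum_nonneg fun _ _ => add_nonneg (hg _) (hg _)

lemma nbrSum_le {g : Site D n → ℝ} {C : ℝ} (hg : ∀ l', g l' ≤ C) (l : Site D n) :
    nbrSum g l ≤ 2 * n * C := by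
  calc nbrSum g l ≤ ∑ _k : Fin n, (C + C) :=
        Finset.sum_le_sum fun _ _ => add_le_add (hg _) (hg _)
    _ = 2 * n * C := by
        simp only [Finset.sum_const, Finset.card_univ, Fintype.card_fin, nsmul_eq_mul]
        ring

lemma lap_eq_mul_nbrSum (f : Site D n → ℝ) (l : Site D n) :
    lap f l = (D : ℝ) ^ 2 * nbrSum (fun l' => f l' - f l) l := by
  simp only [lap, nbrSum, Finset.mul_sum, one_div, inv_pow, div_inv_eq_mul]
  exact Finset.sum_congr rfl fun _ _ => by ring

lemma abs_lap_le (f : Site D n → ℝ) (l : Site D n) :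
    |lap f l| ≤ (D : ℝ) ^ 2 * (2 * n + nbrSum (fun l' => (f l' - f l) ^ 2) l) := by
  have habs : ∀ a : ℝ, |a| ≤ 1 + a ^ 2 := fun a => by
    nlinarith [sq_abs a, sq_nonneg (|a| - 1)]
  rw [lap_eq_mul_nbrSum, abs_mul, abs_of_nonneg (by positivity)]
  gcongr
  calc |nbrSum (fun l' => f l' - f l) l|
      ≤ nbrSum (fun l' => 1 + (f l' - f l) ^ 2) l :=
        (Finset.abs_sum_le_sum_abs _ _).trans <| Finset.sum_le_sum fun _ _ =>
          (abs_add_le _ _).trans (add_le_add (habs _) (habs _))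
    _ = 2 * n + nbrSum (fun l' => (f l' - f l) ^ 2) l := by
        simp only [nbrSum, Finset.sum_add_distrib, Finset.sum_const, Finset.card_univ,
          Fintype.card_fin, nsmul_eq_mul]
        ring

lemma hasDerivAt_nbrSum {F : Site D n → ℝ → ℝ} {F' : Site D n → ℝ} {t : ℝ}
    (hF : ∀ l', HasDerivAt (F l') (F' l') t) (l : Site D n) :
    HasDerivAt (fun s => nbrSum (fun l' => F l' s) l) (nbrSum F' l) t :=
  HasDerivAt.fun_sum fun _ _ => (hF _).add (hF _)

lemma hasDerivAt_lap {x : Site D n → ℝ → ℝ} {x' : Site D n → ℝ} {t : ℝ}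
    (hx : ∀ l, HasDerivAt (x l) (x' l) t) (l : Site D n) :
    HasDerivAt (fun s => lap (fun l' => x l' s) l) (lap x' l) t := by
  simp only [lap_eq_mul_nbrSum]
  exact (hasDerivAt_nbrSum (fun l' => (hx l').sub (hx l)) l).const_mul _

lemma update_add_one_eq_add_single (l : Site D n) (k : Fin n) :
    Function.update l k (l k + 1) = l + Pi.single k 1 := by
  ext j
  rcases eq_or_ne j k with rfl | hj <;> simp [*]

lemma update_sub_one_eq_sub_single (l : Site D n) (k : Fin n) :
    Function.update l k (l k - 1) = l - Pi.single k 1 := by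
  ext j
  rcases eq_or_ne j k with rfl | hj <;> simp [*]

variable [NeZero D]

lemma sum_nbrSum_swap (F : Site D n → Site D n → ℝ) :
    ∑ l, nbrSum (fun l' => F l l') l = ∑ l, nbrSum (fun l' => F l' l) l := by
  simp only [nbrSum, update_add_one_eq_add_single, update_sub_one_eq_sub_single]
  rw [Finset.sum_comm]
  conv_rhs => rw [Finset.sum_comm]
  refine Finset.sum_congr rfl fun k _ => ?_
  rw [Finset.sum_add_distrib, Finset.sum_add_distrib, add_comm]
  congr 1
  · exact Fintype.sum_equiv (Equiv.subRight (Pi.single k 1)) _ _ (by simp)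
  · exact Fintype.sum_equiv (Equiv.addRight (Pi.single k 1)) _ _ (by simp)

/-- Summation by parts on the torus. -/
lemma sum_nbrSum_mul_sub (X V : Site D n → ℝ) :
    ∑ l, nbrSum (fun l' => (X l' - X l) * (V l' - V l)) l
      = -2 * ∑ l, V l * nbrSum (fun l' => X l' - X l) l := by
  have hsplit : ∀ l, nbrSum (fun l' => (X l' - X l) * (V l' - V l)) l
      = nbrSum (fun l' => (X l' - X l) * V l') l - V l * nbrSum (fun l' => X l' - X l) l := by
    intro l
    simp only [nbrSum, Finset.mul_sum, ← Finset.sum_sub_distrib]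
    exact Finset.sum_congr rfl fun _ _ => by ring
  have hflip : ∀ l, nbrSum (fun l' => (X l - X l') * V l) l
      = -(V l * nbrSum (fun l' => X l' - X l) l) := by
    intro l
    simp only [nbrSum, Finset.mul_sum, ← Finset.sum_neg_distrib]
    exact Finset.sum_congr rfl fun _ _ => by ring
  simp only [hsplit, Finset.sum_sub_distrib, sum_nbrSum_swap (fun l l' => (X l' - X l) * V l'),
    hflip, Finset.sum_neg_distrib]
  ring

end Lattice

section Energy

variable {D n : ℕ} [NeZero D]

/-- Each bond appears twice in the double sum, hence the factor `D² / 4 = 1 / (4 h²)`. -/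
noncomputable def energy (x v : Site D n → ℝ) : ℝ :=
  ∑ l, v l ^ 2 / 2 + (D : ℝ) ^ 2 / 4 * ∑ l, nbrSum (fun l' => (x l' - x l) ^ 2) l

lemma sq_le_two_mul_energy (x v : Site D n → ℝ) (l : Site D n) :
    v l ^ 2 ≤ 2 * energy x v := by
  have hkin : v l ^ 2 / 2 ≤ ∑ l, v l ^ 2 / 2 :=
    Finset.single_le_sum (f := fun l => v l ^ 2 / 2) (fun _ _ => by positivity)
      (Finset.mem_univ l)
  have hpot : 0 ≤ (D : ℝ) ^ 2 / 4 * ∑ l, nbrSum (fun l' => (x l' - x l) ^ 2) l :=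
    mul_nonneg (by positivity)
      (Finset.sum_nonneg fun l _ => nbrSum_nonneg (fun _ => sq_nonneg _) l)
  rw [energy]
  linarith

lemma sq_mul_nbrSum_le_four_mul_energy (x v : Site D n → ℝ) (l : Site D n) :
    (D : ℝ) ^ 2 * nbrSum (fun l' => (x l' - x l) ^ 2) l ≤ 4 * energy x v := by
  have hpot :
      nbrSum (fun l' => (x l' - x l) ^ 2) l ≤ ∑ l, nbrSum (fun l' => (x l' - x l) ^ 2) l :=
    Finset.single_le_sum (f := fun l => nbrSum (fun l' => (x l' - x l) ^ 2) l)
      (fun l _ => nbrSum_nonneg (fun _ => sq_nonneg _) l) (Finset.mem_univ l)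
  have hkin : 0 ≤ ∑ l, v l ^ 2 / 2 := Finset.sum_nonneg fun _ _ => by positivity
  rw [energy]
  nlinarith [sq_nonneg (D : ℝ)]

lemma energy_nonneg (x v : Site D n → ℝ) : 0 ≤ energy x v := by
  have := sq_le_two_mul_energy x v 0
  nlinarith [sq_nonneg (v 0)]

lemma hasDerivAt_energy {x v : Site D n → ℝ → ℝ} {a : Site D n → ℝ} {t : ℝ}
    (hx : ∀ l, HasDerivAt (x l) (v l t) t) (hv : ∀ l, HasDerivAt (v l) (a l) t) :
    HasDerivAt (fun s => energy (fun l => x l s) (fun l => v l s))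
      (∑ l, v l t * (a l - lap (fun l' => x l' t) l)) t := by
  have hkin : HasDerivAt (fun s => ∑ l, v l s ^ 2 / 2) (∑ l, v l t * a l) t :=
    HasDerivAt.fun_sum fun l _ => (((hv l).fun_pow 2).div_const 2).congr_deriv (by ring)
  have hpot : HasDerivAt (fun s => ∑ l, nbrSum (fun l' => (x l' s - x l s) ^ 2) l)
      (∑ l, nbrSum (fun l' => 2 * ((x l' t - x l t) * (v l' t - v l t))) l) t :=
    HasDerivAt.fun_sum fun l _ => hasDerivAt_nbrSum
      (fun l' => (((hx l').fun_sub (hx l)).fun_pow 2).congr_deriv (by ring)) l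
  unfold energy
  refine (hkin.fun_add (hpot.const_mul ((D : ℝ) ^ 2 / 4))).congr_deriv ?_
  simp only [nbrSum_mul_left 2, ← Finset.mul_sum, sum_nbrSum_mul_sub]
  simp only [lap_eq_mul_nbrSum, mul_sub, Finset.sum_sub_distrib, mul_left_comm (v _ t),
    ← Finset.mul_sum]
  ring

end Energy

section Solution

variable {D n : ℕ}

def IsLatticeWaveSolution (G : ℝ → ℝ) (x v : Site D n → ℝ → ℝ) : Prop :=
  ∀ l t, 0 ≤ t →
    HasDerivAt (x l) (v l t) t ∧ HasDerivAt (v l) (lap (fun l' => x l' t) l + G (v l t)) t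

namespace IsLatticeWaveSolution

variable [NeZero D] {G : ℝ → ℝ} {x v : Site D n → ℝ → ℝ}

lemma hasDerivAt_energy (h : IsLatticeWaveSolution G x v) {t : ℝ} (ht : 0 ≤ t) :
    HasDerivAt (fun s => energy (fun l => x l s) (fun l => v l s))
      (∑ l, v l t * G (v l t)) t :=
  (_root_.hasDerivAt_energy (fun l => (h l t ht).1) (fun l => (h l t ht).2)).congr_deriv
    (by simp only [add_sub_cancel_left])

lemma energy_antitoneOn (h : IsLatticeWaveSolution G x v) (hG : ∀ y, y * G y ≤ 0) :
    AntitoneOn (fun t => energy (fun l => x l t) (fun l => v l t)) (Set.Ici 0) :=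
  antitoneOn_of_hasDerivWithinAt_nonpos (convex_Ici 0)
    (fun _ ht => (h.hasDerivAt_energy ht).continuousAt.continuousWithinAt)
    (fun _ ht => (h.hasDerivAt_energy (interior_subset ht)).hasDerivWithinAt)
    (fun _ _ => Finset.sum_nonpos fun _ _ => hG _)

lemma exists_tendsto_energy (h : IsLatticeWaveSolution G x v) (hG : ∀ y, y * G y ≤ 0) :
    ∃ L, Tendsto (fun t => energy (fun l => x l t) (fun l => v l t)) atTop (𝓝 L) := by
  have hanti : Antitone fun t => energy (fun l => x l (max t 0)) (fun l => v l (max t 0)) :=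
    fun s t hst => h.energy_antitoneOn hG (le_max_right s 0) (le_max_right t 0)
      (max_le_max hst le_rfl)
  have hbdd : BddBelow
      (Set.range fun t => energy (fun l => x l (max t 0)) (fun l => v l (max t 0))) :=
    ⟨0, by rintro _ ⟨t, rfl⟩; exact energy_nonneg _ _⟩
  exact ⟨_, (tendsto_atTop_ciInf hanti hbdd).congr' <|
    (eventually_ge_atTop 0).mono fun t ht => by simp only [max_eq_left ht]⟩

lemma energy_le_initial (h : IsLatticeWaveSolution G x v) (hG : ∀ y, y * G y ≤ 0) {t : ℝ}
    (ht : 0 ≤ t) :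
    energy (fun l => x l t) (fun l => v l t) ≤ energy (fun l => x l 0) (fun l => v l 0) :=
  h.energy_antitoneOn hG Set.self_mem_Ici ht ht

lemma isBigO_velocity (h : IsLatticeWaveSolution G x v) (hG : ∀ y, y * G y ≤ 0)
    (l : Site D n) : v l =O[atTop] fun _ => (1 : ℝ) := by
  refine isBigO_one_of_abs_le fun t ht =>
    Real.abs_le_sqrt (y := 2 * energy (fun l => x l 0) (fun l => v l 0)) ?_
  linarith [sq_le_two_mul_energy (fun l => x l t) (fun l => v l t) l, h.energy_le_initial hG ht]

lemma isBigO_lap_position (h : IsLatticeWaveSolution G x v) (hG : ∀ y, y * G y ≤ 0)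
    (l : Site D n) : (fun t => lap (fun l' => x l' t) l) =O[atTop] fun _ => (1 : ℝ) := by
  refine isBigO_one_of_abs_le (C := (D : ℝ) ^ 2 * (2 * n) + 4 * energy (fun l => x l 0)
    (fun l => v l 0)) fun t ht => (abs_lap_le _ l).trans ?_
  have := sq_mul_nbrSum_le_four_mul_energy (fun l => x l t) (fun l => v l t) l
  linarith [h.energy_le_initial hG ht]

lemma isBigO_lap_velocity (h : IsLatticeWaveSolution G x v) (hG : ∀ y, y * G y ≤ 0)
    (l : Site D n) : (fun t => lap (fun l' => v l' t) l) =O[atTop] fun _ => (1 : ℝ) := by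
  set E₀ := energy (fun l => x l 0) (fun l => v l 0)
  refine isBigO_one_of_abs_le (C := (D : ℝ) ^ 2 * (2 * n + 2 * n * (8 * E₀)))
    fun t ht => (abs_lap_le _ l).trans ?_
  have hv : ∀ l', v l' t ^ 2 ≤ 2 * E₀ := fun l' =>
    (sq_le_two_mul_energy (fun l => x l t) (fun l => v l t) l').trans
      (by linarith [h.energy_le_initial hG ht])
  gcongr
  exact nbrSum_le (fun l' => by nlinarith [hv l', hv l, sq_nonneg (v l' t + v l t)]) l

lemma isBigO_acceleration (h : IsLatticeWaveSolution G x v) (hG : ∀ y, y * G y ≤ 0)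
    (hGb : ∀ f : ℝ → ℝ, f =O[atTop] (fun _ => (1 : ℝ)) →
      (fun t => G (f t)) =O[atTop] fun _ => (1 : ℝ)) (l : Site D n) :
    (fun t => lap (fun l' => x l' t) l + G (v l t)) =O[atTop] fun _ => (1 : ℝ) :=
  (h.isBigO_lap_position hG l).add (hGb _ (h.isBigO_velocity hG l))

lemma tendsto_velocity (h : IsLatticeWaveSolution G x v) {c : ℝ} (hc : 0 < c)
    (hG : ∀ y, y * G y ≤ -(c * y ^ 2))
    (hGb : ∀ f : ℝ → ℝ, f =O[atTop] (fun _ => (1 : ℝ)) →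
      (fun t => G (f t)) =O[atTop] fun _ => (1 : ℝ)) (l : Site D n) :
    Tendsto (v l) atTop (𝓝 0) := by
  have hG₀ : ∀ y, y * G y ≤ 0 := fun y => (hG y).trans (neg_nonpos.2 (by positivity))
  obtain ⟨L, hL⟩ := h.exists_tendsto_energy hG₀
  refine tendsto_zero_of_deriv_le_neg_mul_sq hc hL
    ((eventually_ge_atTop 0).mono fun t ht => h.hasDerivAt_energy ht)
    (Eventually.of_forall fun t => ?_) ((eventually_ge_atTop 0).mono fun t ht => (h l t ht).2)
    (h.isBigO_acceleration hG₀ hGb l)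
  have := Finset.single_le_sum (f := fun l => -(v l t * G (v l t)))
    (fun l _ => neg_nonneg.2 (hG₀ _)) (Finset.mem_univ l)
  rw [Finset.sum_neg_distrib] at this
  linarith [hG (v l t)]

lemma tendsto_lap (h : IsLatticeWaveSolution G x v) {c : ℝ} (hc : 0 < c)
    (hG : ∀ y, y * G y ≤ -(c * y ^ 2))
    (hGb : ∀ f : ℝ → ℝ, f =O[atTop] (fun _ => (1 : ℝ)) →
      (fun t => G (f t)) =O[atTop] fun _ => (1 : ℝ)) {a κ μ : ℝ} (ha : 0 < a)
    (hGa : ∀ y, |y| < a → G y = κ * y + μ * y ^ 3) (l : Site D n) :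
    Tendsto (fun t => lap (fun l' => x l' t) l) atTop (𝓝 0) := by
  have hG₀ : ∀ y, y * G y ≤ 0 := fun y => (hG y).trans (neg_nonpos.2 (by positivity))
  have hv₀ := h.tendsto_velocity hc hG hGb l
  set φ := fun t => lap (fun l' => x l' t) l + (κ * v l t + μ * v l t ^ 3)
  have hvφ : ∀ᶠ t in atTop, HasDerivAt (v l) (φ t) t := by
    filter_upwards [eventually_ge_atTop 0, Metric.tendsto_nhds.1 hv₀ a ha] with t ht hsmall
    rw [Real.dist_eq, sub_zero] at hsmall
    simpa only [φ, hGa _ hsmall] using (h l t ht).2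
  have hφ' : ∀ᶠ t in atTop, HasDerivAt φ (lap (fun l' => v l' t) l
      + (κ + 3 * μ * v l t ^ 2) * (lap (fun l' => x l' t) l + G (v l t))) t := by
    filter_upwards [eventually_ge_atTop 0] with t ht
    have hvt := (h l t ht).2
    exact (hasDerivAt_lap (fun l' => (h l' t ht).1) l).fun_add
      (((hvt.const_mul κ).fun_add ((hvt.fun_pow 3).const_mul μ)).congr_deriv (by ring))
  have hφ'_bdd : (fun t => lap (fun l' => v l' t) l
      + (κ + 3 * μ * v l t ^ 2) * (lap (fun l' => x l' t) l + G (v l t))) =O[atTop]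
      fun _ => (1 : ℝ) := by
    have hv := h.isBigO_velocity hG₀ l
    have hcoef : (fun t => κ + 3 * μ * v l t ^ 2) =O[atTop] fun _ => (1 : ℝ) :=
      (isBigO_const_one ℝ κ atTop).add
        (by simpa only [one_pow, mul_one] using
          (isBigO_const_one ℝ (3 * μ) atTop).mul (hv.pow 2))
    have hprod := hcoef.mul (h.isBigO_acceleration hG₀ hGb l)
    simp only [mul_one] at hprod
    exact (h.isBigO_lap_velocity hG₀ l).add hprod
  have hφ₀ := tendsto_zero_of_tendsto_of_isBigO_deriv hv₀ hvφ hφ' hφ'_bdd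
  simpa [φ] using hφ₀.sub ((hv₀.const_mul κ).add ((hv₀.pow 3).const_mul μ))

end IsLatticeWaveSolution

end Solution

section Feedback

variable {α β M a₁ a₂ : ℝ}

lemma mul_div_abs_self (y : ℝ) : y * (y / |y|) = |y| := by
  rcases eq_or_ne y 0 with rfl | hy
  · simp
  · rw [mul_div_assoc', ← abs_mul_abs_self y, mul_div_assoc, div_self (abs_ne_zero.2 hy),
      mul_one]

lemma abs_div_abs_self_le_one (y : ℝ) : |(y / |y|)| ≤ 1 := by
  rw [abs_div, abs_abs]
  exact div_self_le_one _

lemma abs_fb_le (hM : 0 ≤ M) (y : ℝ) : |fb M a₁ a₂ y| ≤ M := by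
  unfold fb
  split_ifs with h₂ h₁ h₀
  · simpa using hM
  · have ha₂ : 0 < a₂ := by linarith
    have hlow : 1 < |y| / a₂ := (one_lt_div ha₂).2 h₁
    have hupp : |y| / a₂ < 2 := (div_lt_iff₀ ha₂).2 (by linarith)
    have hratio : |2 - |y| / a₂| ≤ 1 := abs_le.2 ⟨by linarith, by linarith⟩
    rw [abs_mul, abs_mul, abs_neg, abs_of_nonneg hM]
    calc M * |(y / |y|)| * |2 - |y| / a₂| ≤ M * 1 * 1 := by
          gcongr
          exact abs_div_abs_self_le_one y
      _ = M := by ring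
  · rw [abs_mul, abs_neg, abs_of_nonneg hM]
    exact mul_le_of_le_one_right hM (abs_div_abs_self_le_one y)
  · have ha₁ : 0 < a₁ := (abs_nonneg y).trans_lt (not_le.1 h₀)
    rw [abs_mul, abs_neg, abs_of_nonneg hM, abs_div, abs_of_pos ha₁]
    exact mul_le_of_le_one_right hM ((div_le_one ha₁).2 (not_le.1 h₀).le)

lemma mul_fb_nonpos (hM : 0 ≤ M) (y : ℝ) : y * fb M a₁ a₂ y ≤ 0 := by
  unfold fb
  split_ifs with h₂ h₁ h₀
  · simp
  · have ha₂ : 0 < a₂ := by linarith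
    have hfactor : 0 ≤ 2 - |y| / a₂ := by
      rw [sub_nonneg, div_le_iff₀ ha₂]
      linarith
    have hrw : y * (-M * (y / |y|) * (2 - |y| / a₂))
        = -(M * (y * (y / |y|)) * (2 - |y| / a₂)) := by
      ring
    rw [hrw, mul_div_abs_self, neg_nonpos]
    positivity
  · rw [show y * (-M * (y / |y|)) = -(M * (y * (y / |y|))) by ring, mul_div_abs_self,
      neg_nonpos]
    positivity
  · have ha₁ : 0 < a₁ := (abs_nonneg y).trans_lt (not_le.1 h₀)
    rw [show y * (-M * (y / a₁)) = -(M * y ^ 2 / a₁) by ring, neg_nonpos]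
    positivity

lemma mul_fb_of_le_abs_of_abs_le (ha₁ : 0 < a₁) (h₁ : a₁ ≤ |y|) (h₂ : |y| ≤ a₂) :
    y * fb M a₁ a₂ y = -(M * |y|) := by
  rw [fb, if_neg (by linarith), if_neg h₂.not_gt, if_pos h₁,
    show y * (-M * (y / |y|)) = -(M * (y * (y / |y|))) by ring, mul_div_abs_self]

lemma fb_of_abs_lt (ha₁₂ : a₁ ≤ a₂) (hy : |y| < a₁) :
    fb M a₁ a₂ y = -M * (y / a₁) := by
  have ha₁ : 0 < a₁ := (abs_nonneg y).trans_lt hy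
  rw [fb, if_neg (by linarith), if_neg (by linarith), if_neg hy.not_ge]

lemma mul_sub_mul_pow_three_le (hα : 0 < α) (hβ : 0 < β) {s : ℝ} (hs : 0 ≤ s) :
    α * s - β * s ^ 3 ≤ 2 / (3 * Real.sqrt 3) * Real.sqrt (α ^ 3 / β) := by
  set s₀ := Real.sqrt (α / (3 * β))
  have hs₀ : s₀ ^ 2 = α / (3 * β) := Real.sq_sqrt (by positivity)
  have hsqrt3 : Real.sqrt 3 ^ 2 = 3 := Real.sq_sqrt (by norm_num)
  -- `α s - β s³` attains its maximum over `s ≥ 0` at `s₀`, where it equals `2 α s₀ / 3`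
  have hmax : 2 / (3 * Real.sqrt 3) * Real.sqrt (α ^ 3 / β) = 2 * α * s₀ / 3 := by
    rw [show α ^ 3 / β = (Real.sqrt 3 * α * s₀) ^ 2 by
        rw [mul_pow, mul_pow, hsqrt3, hs₀]; field_simp,
      Real.sqrt_sq (by positivity)]
    field_simp
  have hα₀ : α = 3 * β * s₀ ^ 2 := by rw [hs₀]; field_simp
  rw [hmax, hα₀]
  nlinarith [mul_nonneg (mul_nonneg hβ.le (sq_nonneg (s - s₀)))
    (by positivity : 0 ≤ s + 2 * s₀)]

noncomputable def kgForce (α β M a₁ a₂ y : ℝ) : ℝ :=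
  (α - β * y ^ 2) * y + fb M a₁ a₂ y

lemma kgForce_of_abs_lt (ha₁₂ : a₁ ≤ a₂) (hy : |y| < a₁) :
    kgForce α β M a₁ a₂ y = (α - M / a₁) * y + -β * y ^ 3 := by
  rw [kgForce, fb_of_abs_lt ha₁₂ hy]
  ring

lemma mul_kgForce_le_of_abs_lt (hβ : 0 ≤ β) (ha₁₂ : a₁ ≤ a₂) (hy : |y| < a₁) :
    y * kgForce α β M a₁ a₂ y ≤ -((M / a₁ - α) * y ^ 2) := by
  rw [kgForce_of_abs_lt ha₁₂ hy]
  nlinarith [mul_nonneg hβ (pow_nonneg (sq_nonneg y) 2)]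

lemma mul_kgForce_le_of_le_abs_of_abs_le (hα : 0 < α) (hβ : 0 < β) (ha₁ : 0 < a₁)
    (hM : 2 / (3 * Real.sqrt 3) * Real.sqrt (α ^ 3 / β) < M)
    (h₁ : a₁ ≤ |y|) (h₂ : |y| ≤ a₂) :
    y * kgForce α β M a₁ a₂ y
      ≤ -((M - 2 / (3 * Real.sqrt 3) * Real.sqrt (α ^ 3 / β)) / a₂ * y ^ 2) := by
  set P := 2 / (3 * Real.sqrt 3) * Real.sqrt (α ^ 3 / β)
  have ha₂ : 0 < a₂ := ha₁.trans_le (h₁.trans h₂)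
  have hcubic : y * ((α - β * y ^ 2) * y) = |y| * (α * |y| - β * |y| ^ 3) := by
    rw [show y * ((α - β * y ^ 2) * y) = (α - β * y ^ 2) * y ^ 2 by ring, ← sq_abs y]
    ring
  have hquad : (M - P) / a₂ * y ^ 2 ≤ (M - P) * |y| := by
    rw [div_mul_eq_mul_div, div_le_iff₀ ha₂, ← sq_abs y]
    nlinarith [mul_nonneg (mul_nonneg (sub_pos.2 hM).le (abs_nonneg y)) (sub_nonneg.2 h₂)]
  rw [kgForce, mul_add, hcubic, mul_fb_of_le_abs_of_abs_le ha₁ h₁ h₂]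
  nlinarith [mul_le_mul_of_nonneg_left (mul_sub_mul_pow_three_le hα hβ (abs_nonneg y))
    (abs_nonneg y)]

lemma mul_kgForce_le_of_le_abs (hβ : 0 ≤ β) (hM : 0 ≤ M) (ha₂ : 0 ≤ a₂)
    (hy : a₂ ≤ |y|) :
    y * kgForce α β M a₁ a₂ y ≤ -((β * a₂ ^ 2 - α) * y ^ 2) := by
  have hy2 : a₂ ^ 2 ≤ y ^ 2 := by
    rw [← sq_abs y]
    exact pow_le_pow_left₀ ha₂ hy 2
  rw [kgForce, mul_add]
  nlinarith [mul_fb_nonpos (a₁ := a₁) (a₂ := a₂) hM y,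
    mul_nonneg (mul_nonneg hβ (sub_nonneg.2 hy2)) (sq_nonneg y)]

lemma exists_pos_mul_kgForce_le (hα : 0 < α) (hβ : 0 < β) (ha₁ : 0 < a₁)
    (ha₁₂ : a₁ ≤ a₂)
    (hM : 2 / (3 * Real.sqrt 3) * Real.sqrt (α ^ 3 / β) < M) (hαa₁ : α * a₁ < M)
    (hαa₂ : α < β * a₂ ^ 2) :
    ∃ c > 0, ∀ y, y * kgForce α β M a₁ a₂ y ≤ -(c * y ^ 2) := by
  set P := 2 / (3 * Real.sqrt 3) * Real.sqrt (α ^ 3 / β)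
  have ha₂ : 0 < a₂ := ha₁.trans_le ha₁₂
  have hM₀ : 0 ≤ M := (by positivity : 0 ≤ P).trans hM.le
  have hc₁ : 0 < M / a₁ - α := sub_pos.2 ((lt_div_iff₀ ha₁).2 hαa₁)
  have hc₂ : 0 < (M - P) / a₂ := div_pos (sub_pos.2 hM) ha₂
  set c := min (M / a₁ - α) (min ((M - P) / a₂) (β * a₂ ^ 2 - α))
  refine ⟨c, lt_min hc₁ (lt_min hc₂ (sub_pos.2 hαa₂)), fun y => ?_⟩
  have hweaken : ∀ c' ≥ c, -(c' * y ^ 2) ≤ -(c * y ^ 2) :=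
    fun c' hc' => neg_le_neg (mul_le_mul_of_nonneg_right hc' (sq_nonneg y))
  rcases lt_or_ge |y| a₁ with h₁ | h₁
  · exact (mul_kgForce_le_of_abs_lt hβ.le ha₁₂ h₁).trans (hweaken _ (min_le_left _ _))
  rcases le_or_gt |y| a₂ with h₂ | h₂
  · exact (mul_kgForce_le_of_le_abs_of_abs_le hα hβ ha₁ hM h₁ h₂).trans
      (hweaken _ ((min_le_right _ _).trans (min_le_left _ _)))
  · exact (mul_kgForce_le_of_le_abs hβ.le hM₀ ha₂.le h₂.le).trans
      (hweaken _ ((min_le_right _ _).trans (min_le_right _ _)))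

lemma isBigO_kgForce_comp {ι : Type*} {l : Filter ι} {f : ι → ℝ} (hM : 0 ≤ M)
    (hf : f =O[l] fun _ => (1 : ℝ)) :
    (fun t => kgForce α β M a₁ a₂ (f t)) =O[l] fun _ => (1 : ℝ) := by
  have hcubic : (fun t => (α - β * f t ^ 2) * f t) =O[l] fun _ => (1 : ℝ) := by
    have hsq := (isBigO_const_one ℝ β l).mul (hf.pow 2)
    simp only [one_pow, mul_one] at hsq
    have h := ((isBigO_const_one ℝ α l).sub hsq).mul hf
    simpa only [mul_one] using h
  exact hcubic.add <|
    IsBigO.of_bound M (Eventually.of_forall fun t => by simpa using abs_fb_le hM _)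

end Feedback

theorem laplacian_tends_to_zero_general (D n : ℕ) [NeZero D]
    (α β M γ : ℝ) (hα : 0 < α) (hβ : 0 < β)
    (hM : 2 / (3 * Real.sqrt 3) * Real.sqrt (α ^ 3 / β) < M)
    (hγ : max 1 (1 / M * Real.sqrt (α ^ 3 / β)) < γ)
    (a₁ a₂ : ℝ)
    (ha₁ : a₁ = γ⁻¹ * Real.sqrt (α / β)) (ha₂ : a₂ = γ * Real.sqrt (α / β))
    (x v : Site D n → ℝ → ℝ)
    (hx : ∀ l t, 0 ≤ t → HasDerivAt (x l) (v l t) t)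
    (hv : ∀ l t, 0 ≤ t → HasDerivAt (v l)
      (lap (fun l' => x l' t) l + (α - β * (v l t) ^ 2) * v l t + fb M a₁ a₂ (v l t)) t) :
    ∀ l : Site D n,
      Filter.Tendsto (fun t => lap (fun l' => x l' t) l) Filter.atTop (nhds 0) := by
  have hγ₁ : 1 < γ := (le_max_left _ _).trans_lt hγ
  have hM₀ : 0 < M :=
    (by positivity : 0 ≤ 2 / (3 * Real.sqrt 3) * Real.sqrt (α ^ 3 / β)).trans_lt hM
  have hγM : Real.sqrt (α ^ 3 / β) < M * γ := by
    have := (le_max_right _ _).trans_lt hγ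
    rwa [one_div_mul_eq_div, div_lt_iff₀ hM₀, mul_comm γ] at this
  have hsqrt : Real.sqrt (α ^ 3 / β) = α * Real.sqrt (α / β) := by
    rw [show α ^ 3 / β = α ^ 2 * (α / β) by ring, Real.sqrt_mul (sq_nonneg α),
      Real.sqrt_sq hα.le]
  have ha₁₀ : 0 < a₁ := ha₁ ▸ by positivity
  have ha₁₂ : a₁ ≤ a₂ := by
    rw [ha₁, ha₂]
    gcongr
    exact (inv_lt_one_of_one_lt₀ hγ₁).le.trans hγ₁.le
  have hαa₁ : α * a₁ < M := by
    rw [ha₁, mul_left_comm, ← hsqrt, inv_mul_lt_iff₀ (by linarith)]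
    linarith
  have hαa₂ : α < β * a₂ ^ 2 := by
    rw [ha₂, mul_pow, Real.sq_sqrt (by positivity), mul_left_comm, mul_div_cancel₀ _ hβ.ne']
    nlinarith [mul_lt_mul_of_pos_right (one_lt_pow₀ hγ₁ two_ne_zero) hα]
  obtain ⟨c, hc, hdiss⟩ := exists_pos_mul_kgForce_le hα hβ ha₁₀ ha₁₂ hM hαa₁ hαa₂
  have hsol : IsLatticeWaveSolution (kgForce α β M a₁ a₂) x v := fun l t ht =>
    ⟨hx l t ht, by simpa only [kgForce, add_assoc] using hv l t ht⟩
  exact hsol.tendsto_lap hc hdiss (fun _ hf => isBigO_kgForce_comp hM₀.le hf) ha₁₀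
    (fun _ hy => kgForce_of_abs_lt ha₁₂ hy)

/-- Lemma 2.2: under the feedback control, the discrete Laplacian of the
positions converges to zero at every site. -/
theorem laplacian_tends_to_zero (D n : ℕ) [NeZero D] (hn : 1 ≤ n)
    (α β M γ : ℝ) (hα : 0 < α) (hβ : 0 < β)
    (hM : 2 / (3 * Real.sqrt 3) * Real.sqrt (α ^ 3 / β) < M)
    (hγ : max 1 (1 / M * Real.sqrt (α ^ 3 / β)) < γ)
    (a₁ a₂ : ℝ)
    (ha₁ : a₁ = γ⁻¹ * Real.sqrt (α / β)) (ha₂ : a₂ = γ * Real.sqrt (α / β))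
    (x v : Site D n → ℝ → ℝ)
    (hx : ∀ l t, 0 ≤ t → HasDerivAt (x l) (v l t) t)
    (hv : ∀ l t, 0 ≤ t → HasDerivAt (v l)
      (lap (fun l' => x l' t) l + (α - β * (v l t) ^ 2) * v l t + fb M a₁ a₂ (v l t)) t) :
    ∀ l : Site D n,
      Filter.Tendsto (fun t => lap (fun l' => x l' t) l) Filter.atTop (nhds 0) :=
  laplacian_tends_to_zero_general D n α β M γ hα hβ hM hγ a₁ a₂ ha₁ ha₂ x v hx hv
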